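/- Let k ≥ 1 and for each i = 1,…,k let μ_i and ν_i be probability measures on a finite set S_i with ν_i(x) > 0 for all x ∈ S_i. Let μ = ⊗_{i=1}^k μ_i and ν = ⊗_{i=1}^k ν_i be the product measures on ∏_{i=1}^k S_i. Then ‖μ − ν‖²_{L²(ν)} ≤ exp(Σ_{i=1}^k ‖μ_i − ν_i‖²_{L²(ν_i)}) − 1. -/

import Mathlib

open Finset Filter MeasureTheory

noncomputable section

open scoped Classical

variable {V : Type} [Fintype V] [DecidableEq V]

/-- The finset of monochromatic edges of the configuration `σ`. -/
def monoEdges (G : SimpleGraph V) {q : ℕ} (σ : V → Fin q) : Finset (Sym2 V) :=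
  G.edgeFinset.filter fun e => ∀ u ∈ e, ∀ v ∈ e, σ u = σ v

/-- The number of connected components of the graph `(V, ω)` (isolated vertices count
as components). -/
def numComp (ω : Finset (Sym2 V)) : ℕ :=
  Nat.card (SimpleGraph.fromEdgeSet (↑ω : Set (Sym2 V))).ConnectedComponent

/-- `τ` is constant on every connected component of the graph `(V, ω)`. -/
def constOnComp {q : ℕ} (ω : Finset (Sym2 V)) (τ : V → Fin q) : Prop :=
  ∀ u v : V, (SimpleGraph.fromEdgeSet (↑ω : Set (Sym2 V))).Reachable u v → τ u = τ v

/-- Transition matrix of the Swendsen–Wang dynamics for the `q`-state Potts model,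
with percolation parameter `p = 1 - exp (-β)`. -/
def swMatrix (G : SimpleGraph V) (q : ℕ) (p : ℝ) :
    Matrix (V → Fin q) (V → Fin q) ℝ :=
  Matrix.of fun σ τ =>
    ∑ ω ∈ (monoEdges G σ).powerset,
      p ^ ω.card * (1 - p) ^ ((monoEdges G σ).card - ω.card) * ((q : ℝ) ^ numComp ω)⁻¹ *
        (if constOnComp ω τ then 1 else 0)

/-- The `q`-state Potts measure at inverse temperature `β` where `p = 1 - exp (-β)`,
so that `exp (β * k) = ((1 - p) ^ k)⁻¹`. -/
def pottsPi (G : SimpleGraph V) (q : ℕ) (p : ℝ) : (V → Fin q) → ℝ := fun σ =>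
  ((1 - p) ^ (monoEdges G σ).card)⁻¹ /
    ∑ τ : V → Fin q, ((1 - p) ^ (monoEdges G τ).card)⁻¹

/-- Total-variation distance between two (probability) vectors. -/
def tvDist {S : Type} [Fintype S] (μ ν : S → ℝ) : ℝ := (∑ x, |μ x - ν x|) / 2

/-- `L²(ν)` distance between two (probability) vectors. -/
def l2Dist {S : Type} [Fintype S] (μ ν : S → ℝ) : ℝ :=
  Real.sqrt (∑ x, (μ x / ν x - 1) ^ 2 * ν x)

/-- Worst-case total-variation distance from stationarity at time `t`. -/
def swTV (G : SimpleGraph V) (q : ℕ) (p : ℝ) (t : ℕ) : ℝ :=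
  ⨆ x₀ : V → Fin q, tvDist (fun y => (swMatrix G q p ^ t) x₀ y) (pottsPi G q p)

/-- Worst-case `L²(π)` distance from stationarity at time `t`. -/
def swL2 (G : SimpleGraph V) (q : ℕ) (p : ℝ) (t : ℕ) : ℝ :=
  ⨆ x₀ : V → Fin q, l2Dist (fun y => (swMatrix G q p ^ t) x₀ y) (pottsPi G q p)

/-- Mixing time of the Swendsen–Wang dynamics. -/
def swMix (G : SimpleGraph V) (q : ℕ) (p : ℝ) (ε : ℝ) : ℕ :=
  sInf {t : ℕ | swTV G q p t ≤ ε}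

/-- Spectral gap of the (reversible) Swendsen–Wang dynamics: `1` minus the largest
absolute value of an eigenvalue on the space of `π`-mean-zero functions. -/
def swGap (G : SimpleGraph V) (q : ℕ) (p : ℝ) : ℝ :=
  1 - sSup {x : ℝ | ∃ lam : ℝ, x = |lam| ∧ ∃ f : (V → Fin q) → ℝ, f ≠ 0 ∧
      (∑ σ, pottsPi G q p σ * f σ) = 0 ∧
      ∀ σ, (∑ τ, swMatrix G q p σ τ * f τ) = lam * f σ}

/-- The `d`-dimensional discrete torus of side length `n` (nearest-neighbour graph with
periodic boundary conditions). -/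
def torus (d n : ℕ) : SimpleGraph (Fin d → ZMod n) where
  Adj x y := x ≠ y ∧ ∃ i, (x i = y i + 1 ∨ y i = x i + 1) ∧ ∀ j, j ≠ i → x j = y j
  symm := by
    constructor
    rintro x y ⟨hxy, i, h1, h2⟩
    exact ⟨hxy.symm, i, h1.symm, fun j hj => (h2 j hj).symm⟩
  loopless := ⟨fun x h => h.1 rfl⟩

/-- Spectral gap of the Swendsen–Wang dynamics on the torus `ℤ_n^d` (junk value for `n = 0`). -/
def torusGap (d q : ℕ) (p : ℝ) (n : ℕ) : ℝ :=
  if h : n = 0 then 0 else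
    letI : NeZero n := ⟨h⟩
    swGap (torus d n) q p

/-- Worst-case TV distance from stationarity of SW dynamics on `ℤ_n^d` at time `t`. -/
def torusTV (d q : ℕ) (p : ℝ) (n t : ℕ) : ℝ :=
  if h : n = 0 then 0 else
    letI : NeZero n := ⟨h⟩
    swTV (torus d n) q p t

/-- Mixing time of the SW dynamics on `ℤ_n^d`. -/
def torusMix (d q : ℕ) (p : ℝ) (n : ℕ) (ε : ℝ) : ℕ :=
  if h : n = 0 then 0 else
    letI : NeZero n := ⟨h⟩
    swMix (torus d n) q p ε

/-- `γ⋆(r) = log (1 / (1 - γ(r)))` where `γ(r)` is the gap on `ℤ_r^d`. -/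
def gammaStarAt (d q : ℕ) (p : ℝ) (r : ℕ) : ℝ :=
  Real.log (1 / (1 - torusGap d q p r))

/-- Marginal (push-forward) of a measure along a map `f`. -/
def marginal {S T : Type} [Fintype S] (μ : S → ℝ) (f : S → T) : T → ℝ :=
  fun y => ∑ x ∈ Finset.univ.filter (fun x => f x = y), μ x

/-- The subcube of side length `m` inside the torus of side length `r`. -/
def cube (d r m : ℕ) : Set (Fin d → ZMod r) := {x | ∀ i, (x i).val < m}

/-- Worst-case `L²` distance from stationarity of the marginal on the subcube of side
length `m` of the SW dynamics on `ℤ_r^d` at time `t`. -/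
def projL2 (d q r m : ℕ) (p : ℝ) (t : ℕ) : ℝ :=
  if h : r = 0 then 0 else
    letI : NeZero r := ⟨h⟩
    ⨆ x₀ : (Fin d → ZMod r) → Fin q,
      l2Dist
        (marginal (fun y => (swMatrix (torus d r) q p ^ t) x₀ y)
          (fun σ (v : ↥(cube d r m)) => σ v.1))
        (marginal (pottsPi (torus d r) q p) (fun σ (v : ↥(cube d r m)) => σ v.1))

/-- Worst-case TV distance from stationarity of the marginal on the subcube of side
length `m` of the SW dynamics on `ℤ_r^d` at time `t`. -/
def projTV (d q r m : ℕ) (p : ℝ) (t : ℕ) : ℝ :=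
  if h : r = 0 then 0 else
    letI : NeZero r := ⟨h⟩
    ⨆ x₀ : (Fin d → ZMod r) → Fin q,
      tvDist
        (marginal (fun y => (swMatrix (torus d r) q p ^ t) x₀ y)
          (fun σ (v : ↥(cube d r m)) => σ v.1))
        (marginal (pottsPi (torus d r) q p) (fun σ (v : ↥(cube d r m)) => σ v.1))

/-- The quantity `m_t` of the paper: `r = 3 log⁵ n` and `Λ` a subcube of side `2 log⁵ n`. -/
def mOf (d q : ℕ) (p : ℝ) (n t : ℕ) : ℝ :=
  projL2 d q ⌊3 * Real.log n ^ 5⌋₊ ⌊2 * Real.log n ^ 5⌋₊ p t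

/-- The quantity `m_t*` of the paper: the TV analogue of `m_t`. -/
def mStarOf (d q : ℕ) (p : ℝ) (n t : ℕ) : ℝ :=
  projTV d q ⌊3 * Real.log n ^ 5⌋₊ ⌊2 * Real.log n ^ 5⌋₊ p t

/-- `γ⋆(r)` with `r = 3 log⁵ n`. -/
def gammaStarN (d q : ℕ) (p : ℝ) (n : ℕ) : ℝ :=
  gammaStarAt d q p ⌊3 * Real.log n ^ 5⌋₊

/-! `1 + ‖μ - ν‖²_{L²(ν)} = ∑ μ² / ν` is multiplicative over product measures, and
`1 + a ≤ exp a` for each factor. -/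

theorem sq_l2Dist_eq_sum_sq_div_sub_one {S : Type} [Fintype S] {μ ν : S → ℝ}
    (hμ : ∑ x, μ x = 1) (hν_pos : ∀ x, 0 < ν x) (hν : ∑ x, ν x = 1) :
    l2Dist μ ν ^ 2 = ∑ x, μ x ^ 2 / ν x - 1 := by
  have hterm (x : S) : (μ x / ν x - 1) ^ 2 * ν x = μ x ^ 2 / ν x - 2 * μ x + ν x := by
    field_simp [(hν_pos x).ne']
    ring
  rw [l2Dist, Real.sq_sqrt (sum_nonneg fun x _ => mul_nonneg (sq_nonneg _) (hν_pos x).le),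
    sum_congr rfl fun x _ => hterm x, sum_add_distrib, sum_sub_distrib, ← mul_sum, hμ, hν]
  ring

theorem sum_pi_prod_eq_one {ι : Type*} [Fintype ι] [DecidableEq ι] {S : ι → Type*}
    [∀ i, Fintype (S i)] {f : ∀ i, S i → ℝ} (hf : ∀ i, ∑ x, f i x = 1) :
    ∑ x : ∀ i, S i, ∏ i, f i (x i) = 1 := by
  simp [← Fintype.prod_sum, hf]

theorem sq_l2Dist_pi {ι : Type} [Fintype ι] [DecidableEq ι] {S : ι → Type}
    [∀ i, Fintype (S i)] {μ ν : ∀ i, S i → ℝ} (hμ : ∀ i, ∑ x, μ i x = 1)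
    (hν_pos : ∀ i x, 0 < ν i x) (hν : ∀ i, ∑ x, ν i x = 1) :
    l2Dist (fun x : ∀ i, S i => ∏ i, μ i (x i)) (fun x : ∀ i, S i => ∏ i, ν i (x i)) ^ 2
      = ∏ i, (1 + l2Dist (μ i) (ν i) ^ 2) - 1 := by
  rw [sq_l2Dist_eq_sum_sq_div_sub_one (sum_pi_prod_eq_one hμ)
    (fun x => prod_pos fun i _ => hν_pos i (x i)) (sum_pi_prod_eq_one hν)]
  simp only [sq_l2Dist_eq_sum_sq_div_sub_one (hμ _) (hν_pos _) (hν _), add_sub_cancel,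
    Fintype.prod_sum, ← prod_pow, ← prod_div_distrib]

theorem l2_product_general (k : ℕ) (S : Fin k → Type) [∀ i, Fintype (S i)]
    (μ ν : ∀ i, S i → ℝ)
    (hμ : ∀ i, (∀ x, 0 ≤ μ i x) ∧ ∑ x, μ i x = 1)
    (hν : ∀ i, (∀ x, 0 < ν i x) ∧ ∑ x, ν i x = 1) :
    l2Dist (fun x : ∀ i, S i => ∏ i, μ i (x i)) (fun x : ∀ i, S i => ∏ i, ν i (x i)) ^ 2
      ≤ Real.exp (∑ i, l2Dist (μ i) (ν i) ^ 2) - 1 := by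
  rw [sq_l2Dist_pi (fun i => (hμ i).2) (fun i => (hν i).1) (fun i => (hν i).2)]
  exact sub_le_sub_right (Real.prod_one_add_le_exp_sum _ fun i => sq_nonneg _) 1

/-- `L²` distance between product measures:
`‖⊗μᵢ - ⊗νᵢ‖²_{L²(⊗νᵢ)} ≤ exp (∑ ‖μᵢ - νᵢ‖²_{L²(νᵢ)}) - 1`. -/
theorem l2_product (k : ℕ) (hk : 1 ≤ k) (S : Fin k → Type) [∀ i, Fintype (S i)]
    (μ ν : ∀ i, S i → ℝ)
    (hμ : ∀ i, (∀ x, 0 ≤ μ i x) ∧ ∑ x, μ i x = 1)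
    (hν : ∀ i, (∀ x, 0 < ν i x) ∧ ∑ x, ν i x = 1) :
    l2Dist (fun x : ∀ i, S i => ∏ i, μ i (x i)) (fun x : ∀ i, S i => ∏ i, ν i (x i)) ^ 2
      ≤ Real.exp (∑ i, l2Dist (μ i) (ν i) ^ 2) - 1 :=
  l2_product_general k S μ ν hμ hν

end
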